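/- arXiv:1712.04345 — 5 statements merged into one kernel-verified Lean document; each statement's English description precedes it below -/
import Mathlib

section
/- If P_n = a·(10^m − 1)/9 for some a ∈ {1, 2, …, 9} and some positive integer m, then n ∈ {0, 1, 2, 3}. -/
/-!
Work modulo `440 = 8 · 5 · 11`. The Pell sequence is periodic modulo `440` with period `24`,
while a repunit with at least two digits is `≡ 1 (mod 5)`, `≡ 0` or `1 (mod 11)` and `≡ 3` or
`7 (mod 8)`, i.e. one of `11, 111, 231 (mod 440)`. None of the `24 · 9 · 3` residues
`a · r (mod 440)` is a residue of the Pell sequence, so the repdigit has a single digit, and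
then `P_n ≤ 9 < 12 = P_4` forces `n ≤ 3`.
-/

/-- The Pell sequence: `P 0 = 0`, `P 1 = 1`, `P (n+2) = 2 * P (n+1) + P n`. -/
def pell : ℕ → ℕ
  | 0 => 0
  | 1 => 1
  | n + 2 => 2 * pell (n + 1) + pell n

lemma pell_add_two (n : ℕ) : pell (n + 2) = 2 * pell (n + 1) + pell n := rfl

lemma pell_mono : Monotone pell := by
  refine monotone_nat_of_le_succ fun n => ?_
  cases n with
  | zero => decide
  | succ n => rw [pell_add_two]; omega

lemma pell_add_24_modEq : ∀ n, pell (n + 24) ≡ pell n [MOD 440]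
  | 0 => by decide
  | 1 => by decide
  | n + 2 => by
    rw [pell_add_two, pell_add_two]
    exact ((pell_add_24_modEq (n + 1)).mul_left 2).add (pell_add_24_modEq n)

lemma pell_mod_periodic : Function.Periodic (fun n => pell n % 440) 24 :=
  pell_add_24_modEq

def repunit (m : ℕ) : ℕ := (10 ^ m - 1) / 9

lemma repunit_succ (m : ℕ) : repunit (m + 1) = 10 * repunit m + 1 := by
  have hdvd : 9 ∣ 10 ^ m - 1 := by simpa using Nat.sub_dvd_pow_sub_pow 10 1 m
  have hpos : 1 ≤ 10 ^ m := Nat.one_le_pow _ _ (by norm_num)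
  unfold repunit
  rw [pow_succ]
  omega

lemma repunit_mod_440 {m : ℕ} (hm : 2 ≤ m) :
    repunit m % 440 = 11 ∨ repunit m % 440 = 111 ∨ repunit m % 440 = 231 := by
  induction m, hm using Nat.le_induction with
  | base => decide
  | succ m _ ih => rw [repunit_succ]; omega

lemma pell_mod_440_ne_mul_repunit_mod :
    ∀ k < 24, ∀ a < 10, 0 < a → ∀ r ∈ ({11, 111, 231} : Finset ℕ),
      pell k % 440 ≠ a * r % 440 := by
  decide

/-- If `P_n = a·(10^m − 1)/9` for some `a ∈ {1, …, 9}` and some positive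
integer `m`, then `n ∈ {0, 1, 2, 3}`. -/
theorem pell_repdigit (n m a : ℕ) (hm : 0 < m) (ha1 : 1 ≤ a) (ha9 : a ≤ 9)
    (h : pell n = a * ((10 ^ m - 1) / 9)) :
    n = 0 ∨ n = 1 ∨ n = 2 ∨ n = 3 := by
  change pell n = a * repunit m at h
  obtain rfl | hm2 : m = 1 ∨ 2 ≤ m := by omega
  · have hle : pell n ≤ 9 := by simpa [h, repunit] using ha9
    by_contra! hn
    have h4 : pell 4 ≤ pell n := pell_mono (by omega)
    exact absurd (h4.trans hle) (by decide)
  · exfalso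
    have hmod : pell (n % 24) % 440 = a * (repunit m % 440) % 440 := by
      rw [pell_mod_periodic.map_mod_nat, h, Nat.mul_mod_mod]
    refine pell_mod_440_ne_mul_repunit_mod _ (Nat.mod_lt _ (by norm_num)) a (by omega) ha1 _ ?_ hmod
    rcases repunit_mod_440 hm2 with hr | hr | hr <;> simp [hr]
end

section
/- For every prime p, the inequality e_p ≤ (p + 1)·log α / (2·log p) holds, where α = 1 + √2, z(p) is the smallest positive integer k such that p divides P_k, and e_p is the exponent of p in the factorization of P_{z(p)} (i.e., e_p = ν_p(P_{z(p)})). -/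
/-- The order of appearance of `p` in the Pell sequence: the smallest positive
integer `k` with `p ∣ P k`. -/
noncomputable def pellOrder (p : ℕ) : ℕ := sInf {k : ℕ | 0 < k ∧ p ∣ pell k}

/-!
Write `(1 + √2) ^ n = H n + P n * √2` in `ℤ[√2]`. For an odd prime `p`, Frobenius gives
`P p ≡ 2 ^ ((p - 1) / 2)` and `H p ≡ 1` mod `p`, so `P (p - 1) * P (p + 1) ≡ 1 - 2 ^ (p - 1) ≡ 0`
mod `p`, and `z(p)` divides `p - 1` or `p + 1`. If `z(p) = 2m` is even, then
`P (2m) = 2 P m H m` with `p ∤ 2 P m`, so `p ^ e_p ≤ H m ≤ α ^ m`; if `z(p)` is odd, it divides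
`(p ± 1) / 2` and `p ^ e_p ≤ P z(p) ≤ α ^ (z(p) - 1)`. Either way `p ^ e_p ≤ α ^ k` with
`2k ≤ p + 1`.
-/

/-- The half-companion Pell numbers `H n`. -/
def pellH : ℕ → ℕ
  | 0 => 1
  | n + 1 => pellH n + 2 * pell n

theorem pell_succ_eq_pellH_add_pell : ∀ n, pell (n + 1) = pellH n + pell n
  | 0 => rfl
  | n + 1 => by
    have ih := pell_succ_eq_pellH_add_pell n
    simp only [pellH, pell] at ih ⊢
    omega

theorem pellH_succ_eq_pell_add_pell (n : ℕ) : pellH (n + 1) = pell (n + 1) + pell n := by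
  rw [pellH, pell_succ_eq_pellH_add_pell]
  omega

theorem pellH_pos (n : ℕ) : 0 < pellH n := by
  induction n with
  | zero => exact Nat.one_pos
  | succ n ih => rw [pellH]; omega

theorem sqrtd_one_add_pow (n : ℕ) : (⟨1, 1⟩ : ℤ√2) ^ n = ⟨pellH n, pell n⟩ := by
  induction n with
  | zero => rfl
  | succ n ih =>
    rw [pow_succ, ih, pell_succ_eq_pellH_add_pell, pellH]
    ext <;> simp

theorem pell_add (m n : ℕ) : pell (m + n) = pellH m * pell n + pell m * pellH n := by
  have h := congrArg Zsqrtd.im (pow_add (⟨1, 1⟩ : ℤ√2) m n)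
  simp only [sqrtd_one_add_pow, Zsqrtd.im_mul] at h
  exact_mod_cast h

theorem pell_two_mul (n : ℕ) : pell (2 * n) = 2 * pell n * pellH n := by
  rw [two_mul, pell_add]
  ring

theorem pellH_sq_sub_two_mul_pell_sq (n : ℕ) :
    (pellH n : ℤ) ^ 2 - 2 * pell n ^ 2 = (-1) ^ n := by
  have h := congrArg Zsqrtd.normMonoidHom (sqrtd_one_add_pow n)
  rw [map_pow] at h
  simp only [Zsqrtd.normMonoidHom, MonoidHom.coe_mk, OneHom.coe_mk, Zsqrtd.norm_def] at h
  linear_combination -h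

theorem pell_coprime_pellH (n : ℕ) : (pell n).Coprime (pellH n) := by
  rw [← Nat.isCoprime_iff_coprime]
  refine ⟨-(-1) ^ n * (2 * pell n), (-1) ^ n * pellH n, ?_⟩
  have hsign : ((-1 : ℤ) ^ n) ^ 2 = 1 := by rw [← pow_mul, mul_comm, pow_mul]; norm_num
  linear_combination (-1) ^ n * pellH_sq_sub_two_mul_pell_sq n + hsign

theorem dvd_pell_add_iff {d m : ℕ} (hm : d ∣ pell m) (n : ℕ) :
    d ∣ pell (m + n) ↔ d ∣ pell n := by
  have hcop : d.Coprime (pellH m) := (pell_coprime_pellH m).coprime_dvd_left hm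
  rw [pell_add, Nat.dvd_add_left (dvd_mul_of_dvd_left hm _), hcop.dvd_mul_left]

theorem dvd_pell_mul_add_iff {d m : ℕ} (hm : d ∣ pell m) (k n : ℕ) :
    d ∣ pell (m * k + n) ↔ d ∣ pell n := by
  induction k with
  | zero => simp
  | succ k ih => rw [Nat.mul_succ, add_comm (m * k), add_assoc, dvd_pell_add_iff hm, ih]

theorem pellOrder_pos_and_dvd {p n : ℕ} (hn : 0 < n) (h : p ∣ pell n) :
    0 < pellOrder p ∧ p ∣ pell (pellOrder p) :=
  Nat.sInf_mem (s := {k | 0 < k ∧ p ∣ pell k}) ⟨n, hn, h⟩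

theorem not_dvd_pell_of_lt_pellOrder {p n : ℕ} (hn : 0 < n) (h : n < pellOrder p) :
    ¬ p ∣ pell n :=
  fun hdvd => Nat.notMem_of_lt_sInf h ⟨hn, hdvd⟩

theorem pellOrder_dvd {p n : ℕ} (h : p ∣ pell n) : pellOrder p ∣ n := by
  rcases Nat.eq_zero_or_pos n with rfl | hn
  · exact dvd_zero _
  obtain ⟨hz, hpz⟩ := pellOrder_pos_and_dvd hn h
  have hmod : p ∣ pell (n % pellOrder p) := by
    rwa [← dvd_pell_mul_add_iff hpz (n / pellOrder p), Nat.div_add_mod]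
  by_contra hndvd
  exact not_dvd_pell_of_lt_pellOrder (Nat.pos_of_ne_zero (mt Nat.dvd_of_mod_eq_zero hndvd))
    (Nat.mod_lt n hz) hmod

theorem zmod_pellH_self_and_pell_self {p : ℕ} (hp : p.Prime) (hodd : Odd p) :
    (pellH p : ZMod p) = 1 ∧ (pell p : ZMod p) = 2 ^ (p / 2) := by
  obtain ⟨r, hr⟩ := exists_add_pow_prime_eq hp (1 : ℤ√2) Zsqrtd.sqrtd
  have hsqrtd : (Zsqrtd.sqrtd : ℤ√2) ^ p = ((2 ^ (p / 2) : ℤ) : ℤ√2) * Zsqrtd.sqrtd := by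
    calc (Zsqrtd.sqrtd : ℤ√2) ^ p = Zsqrtd.sqrtd ^ (2 * (p / 2) + 1) := by
          rw [Nat.two_mul_div_two_add_one_of_odd hodd]
      _ = _ := by rw [pow_succ, pow_mul, sq, Zsqrtd.dmuld]; push_cast; rfl
  have hα : (⟨1, 1⟩ : ℤ√2) = 1 + Zsqrtd.sqrtd := by ext <;> simp
  have hr' : (⟨pellH p, pell p⟩ : ℤ√2) = 1 + ((2 ^ (p / 2) : ℤ) : ℤ√2) * Zsqrtd.sqrtd
      + ((p : ℤ) : ℤ√2) * (Zsqrtd.sqrtd * r) := by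
    rw [← sqrtd_one_add_pow, hα, hr, one_pow, hsqrtd]; push_cast; ring
  have hre := congrArg (fun x : ℤ√2 => ((x.re : ℤ) : ZMod p)) hr'
  have him := congrArg (fun x : ℤ√2 => ((x.im : ℤ) : ZMod p)) hr'
  simp only [Zsqrtd.re_add, Zsqrtd.im_add, Zsqrtd.re_smul, Zsqrtd.im_smul] at hre him
  exact ⟨by simpa using hre, by simpa using him⟩

theorem prime_dvd_pell_sub_one_or_pell_add_one {p : ℕ} (hp : p.Prime) (hodd : Odd p) :
    p ∣ pell (p - 1) ∨ p ∣ pell (p + 1) := by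
  have := Fact.mk hp
  obtain ⟨hH, hP⟩ := zmod_pellH_self_and_pell_self hp hodd
  have h2 : (2 : ZMod p) ≠ 0 :=
    Ring.two_ne_zero (by rw [ZMod.ringChar_zmod_n]; exact hodd.ne_two_of_dvd_nat dvd_rfl)
  have hsq : (2 : ZMod p) ^ (p / 2) * 2 ^ (p / 2) = 1 := by
    have : p / 2 + p / 2 = p - 1 := by have := Nat.odd_iff.mp hodd; omega
    rw [← pow_add, this, ZMod.pow_card_sub_one_eq_one h2]
  have hprev : (pell (p - 1) : ZMod p) = pellH p - pell p := by
    have h := pellH_succ_eq_pell_add_pell (p - 1)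
    rw [Nat.sub_add_cancel hp.one_le] at h
    rw [h]; push_cast; ring
  have hnext : (pell (p + 1) : ZMod p) = pellH p + pell p := by
    rw [pell_succ_eq_pellH_add_pell]; push_cast; ring
  simp only [← ZMod.natCast_eq_zero_iff, hprev, hnext, hH, hP, sub_eq_zero,
    eq_comm (a := (1 : ZMod p)), add_eq_zero_iff_eq_neg']
  exact mul_self_eq_one_iff.mp hsq

theorem pellOrder_two : pellOrder 2 = 2 := by
  have h2 : 2 ∣ pell 2 := dvd_rfl
  obtain ⟨hpos, hdvd⟩ := pellOrder_pos_and_dvd two_pos h2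
  have hle := Nat.le_of_dvd two_pos (pellOrder_dvd h2)
  interval_cases h : pellOrder 2
  · norm_num [pell] at hdvd
  · rfl

theorem pellOrder_dvd_sub_one_or_add_one {p : ℕ} (hp : p.Prime) (hodd : Odd p) :
    pellOrder p ∣ p - 1 ∨ pellOrder p ∣ p + 1 :=
  (prime_dvd_pell_sub_one_or_pell_add_one hp hodd).imp pellOrder_dvd pellOrder_dvd

theorem pellOrder_le {p : ℕ} (hp : p.Prime) (hodd : Odd p) : pellOrder p ≤ p + 1 := by
  rcases pellOrder_dvd_sub_one_or_add_one hp hodd with h | h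
  · have := Nat.le_of_dvd (Nat.sub_pos_of_lt hp.one_lt) h
    omega
  · exact Nat.le_of_dvd p.succ_pos h

theorem two_mul_pellOrder_le {p : ℕ} (hp : p.Prime) (hodd : Odd p) (hz : Odd (pellOrder p)) :
    2 * pellOrder p ≤ p + 1 := by
  have hcop : Nat.Coprime 2 (pellOrder p) := hz.coprime_two_left
  rcases pellOrder_dvd_sub_one_or_add_one hp hodd with h | h
  · have h2 : 2 ∣ p - 1 := (Nat.Odd.sub_odd hodd odd_one).two_dvd
    have := Nat.le_of_dvd (Nat.sub_pos_of_lt hp.one_lt) (hcop.mul_dvd_of_dvd_of_dvd h2 h)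
    omega
  · exact Nat.le_of_dvd p.succ_pos (hcop.mul_dvd_of_dvd_of_dvd (hodd.add_odd odd_one).two_dvd h)

theorem ordProj_pell_two_mul_dvd_pellH {p m : ℕ} (hp : p.Prime) (hodd : Odd p)
    (hm : ¬ p ∣ pell m) : ordProj[p] (pell (2 * m)) ∣ pellH m := by
  have hcop : Nat.Coprime p (2 * pell m) :=
    (Nat.coprime_two_right.mpr hodd).mul_right (hp.coprime_iff_not_dvd.mpr hm)
  refine (hcop.pow_left _).dvd_of_dvd_mul_left ?_
  rw [← pell_two_mul]
  exact Nat.ordProj_dvd _ _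

theorem one_add_sqrt_two_pow (n : ℕ) :
    (1 + √2) ^ n = pellH n + pell n * √2 := by
  have h := congrArg (Zsqrtd.lift ⟨√2, Real.mul_self_sqrt zero_le_two⟩) (sqrtd_one_add_pow n)
  rw [map_pow] at h
  simpa using h

theorem pellH_le_one_add_sqrt_two_pow (n : ℕ) : (pellH n : ℝ) ≤ (1 + √2) ^ n := by
  rw [one_add_sqrt_two_pow]
  have : 0 ≤ (pell n : ℝ) * √2 := by positivity
  linarith

theorem pell_succ_le_one_add_sqrt_two_pow (n : ℕ) : (pell (n + 1) : ℝ) ≤ (1 + √2) ^ n := by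
  rw [one_add_sqrt_two_pow, pell_succ_eq_pellH_add_pell, Nat.cast_add]
  have : (pell n : ℝ) ≤ pell n * √2 :=
    le_mul_of_one_le_right (by positivity) Real.one_lt_sqrt_two.le
  linarith

theorem pell_pos {n : ℕ} (hn : 0 < n) : 0 < pell n := by
  obtain ⟨k, rfl⟩ := Nat.exists_eq_succ_of_ne_zero hn.ne'
  rw [pell_succ_eq_pellH_add_pell]
  exact Nat.add_pos_left (pellH_pos k) _

theorem pellOrder_pos_and_dvd_of_prime {p : ℕ} (hp : p.Prime) :
    0 < pellOrder p ∧ p ∣ pell (pellOrder p) := by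
  rcases hp.eq_two_or_odd' with rfl | hodd
  · exact pellOrder_pos_and_dvd two_pos dvd_rfl
  · rcases prime_dvd_pell_sub_one_or_pell_add_one hp hodd with h | h
    · exact pellOrder_pos_and_dvd (Nat.sub_pos_of_lt hp.one_lt) h
    · exact pellOrder_pos_and_dvd p.succ_pos h

theorem pow_two_mul_factorization_pell_pellOrder_le {p : ℕ} (hp : p.Prime) :
    (p : ℝ) ^ (2 * (pell (pellOrder p)).factorization p) ≤ (1 + √2) ^ (p + 1) := by
  set z := pellOrder p
  set e := (pell z).factorization p
  have hα : 1 ≤ 1 + √2 := le_add_of_nonneg_right (Real.sqrt_nonneg 2)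
  suffices ∃ k, 2 * k ≤ p + 1 ∧ (p : ℝ) ^ e ≤ (1 + √2) ^ k by
    obtain ⟨k, hk, hle⟩ := this
    calc (p : ℝ) ^ (2 * e) = ((p : ℝ) ^ e) ^ 2 := by ring
      _ ≤ ((1 + √2) ^ k) ^ 2 := by gcongr
      _ = (1 + √2) ^ (2 * k) := by ring
      _ ≤ (1 + √2) ^ (p + 1) := pow_le_pow_right₀ hα hk
  have hz := (pellOrder_pos_and_dvd_of_prime hp).1
  have hPz : (p : ℝ) ^ e ≤ (1 + √2) ^ (z - 1) := by
    calc (p : ℝ) ^ e ≤ (pell (z - 1 + 1) : ℝ) := by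
          rw [Nat.sub_add_cancel hz]
          exact_mod_cast Nat.ordProj_le p (pell_pos hz).ne'
      _ ≤ (1 + √2) ^ (z - 1) := pell_succ_le_one_add_sqrt_two_pow _
  rcases hp.eq_two_or_odd' with rfl | hodd
  · refine ⟨z - 1, ?_, hPz⟩
    simp [z, pellOrder_two]
  rcases Nat.even_or_odd z with ⟨m, hm⟩ | hzodd
  · refine ⟨m, by have := pellOrder_le hp hodd; omega, ?_⟩
    have hm0 : 0 < m := by omega
    have hdvd : ordProj[p] (pell (2 * m)) ∣ pellH m :=
      ordProj_pell_two_mul_dvd_pellH hp hodd (not_dvd_pell_of_lt_pellOrder hm0 (by omega))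
    rw [← two_mul] at hm
    have he : e = (pell (2 * m)).factorization p := by rw [← hm]
    calc (p : ℝ) ^ e ≤ (pellH m : ℝ) := by
          rw [he]
          exact_mod_cast Nat.le_of_dvd (pellH_pos m) hdvd
      _ ≤ (1 + √2) ^ m := pellH_le_one_add_sqrt_two_pow m
  · exact ⟨z - 1, by have := two_mul_pellOrder_le hp hodd hzodd; omega, hPz⟩

/-- For every prime `p`, with `z(p)` the order of appearance of `p` in the
Pell sequence and `e_p = ν_p(P_{z(p)})`, we have
`e_p ≤ (p + 1)·log α / (2·log p)` where `α = 1 + √2`. -/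
theorem pell_entry_valuation_bound (p : ℕ) (hp : p.Prime) :
    ((pell (pellOrder p)).factorization p : ℝ) ≤
      ((p : ℝ) + 1) * Real.log (1 + Real.sqrt 2) / (2 * Real.log p) := by
  have hlogp : 0 < Real.log p := Real.log_pos (by exact_mod_cast hp.one_lt)
  have hlog := Real.log_le_log (pow_pos (by exact_mod_cast hp.pos) _)
    (pow_two_mul_factorization_pell_pellOrder_le hp)
  rw [Real.log_pow, Real.log_pow] at hlog
  push_cast at hlog
  rw [le_div_iff₀ (by positivity)]
  linarith
end

section
/- If m and n are positive integers satisfying φ(5^m − 1) = 5^n − 1, then m and n are not coprime, i.e., gcd(m, n) > 1. -/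
/-!
If `m` is even, then `24 ∣ 5^m - 1`, so `8 = φ 24 ∣ 5^n - 1` and `n` is even as well.

If `m` is odd, write `5^m - 1 = 4u` with `u` odd, so that `φ u ≡ 2` and `u ≡ 1 (mod 5)`.
When `gcd(m, n) = 1` we have `gcd(5^m - 1, 5^n - 1) = 4`, so `u` is coprime to `φ u` and hence
squarefree. For a prime `q ∣ u`, `5 ≡ 5^(m+1)` is a square mod `q`, so `q ≡ ±1 (mod 5)` by
quadratic reciprocity, and `q ≢ 1` because `q - 1 ∣ 5^n - 1`. Then
`φ(u)² u = ∏ (q - 1)² q ≡ ∏ (-2)² (-1) ≡ 1 (mod 5)`, contradicting `φ(u)² u ≡ 4`.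
-/

open Nat Finset

theorem totient_eq_prod_sub_one_of_squarefree {n : ℕ} (hn : Squarefree n) :
    φ n = ∏ p ∈ n.primeFactors, (p - 1) := by
  have h := totient_mul_prod_primeFactors n
  rw [prod_primeFactors_of_squarefree hn, mul_comm] at h
  exact Nat.eq_of_mul_eq_mul_left (Nat.pos_of_ne_zero hn.ne_zero) h

theorem squarefree_of_coprime_totient {n : ℕ} (h : Coprime n (φ n)) : Squarefree n := by
  rw [Nat.squarefree_iff_prime_squarefree]
  rintro p hp ⟨w, rfl⟩
  have hpφ : p ∣ φ (p * p * w) := by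
    rw [mul_assoc, totient_mul_of_prime_of_dvd hp (dvd_mul_right p w)]
    exact dvd_mul_right p _
  exact hp.one_lt.ne' (Nat.dvd_one.mp
    (h ▸ Nat.dvd_gcd (dvd_mul_of_dvd_left (dvd_mul_right p p) w) hpφ))

theorem isSquare_of_pow_eq_one_of_odd {M : Type*} [Monoid M] {a : M} {m : ℕ} (hm : Odd m)
    (h : a ^ m = 1) : IsSquare a := by
  obtain ⟨k, rfl⟩ := hm
  refine ⟨a ^ (k + 1), ?_⟩
  calc a = a ^ (2 * k + 1) * a := by rw [h, one_mul]
    _ = a ^ (k + 1) * a ^ (k + 1) := by rw [← pow_succ, ← pow_add]; ring_nf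

theorem natCast_pow_eq_one_of_dvd_pow_sub_one {a m p : ℕ} (ha : a ≠ 0) (h : p ∣ a ^ m - 1) :
    (a : ZMod p) ^ m = 1 := by
  have h1 : 1 ≤ a ^ m := Nat.one_le_pow _ _ (Nat.pos_of_ne_zero ha)
  have := (ZMod.natCast_eq_zero_iff _ p).mpr h
  push_cast [Nat.cast_sub h1] at this
  exact sub_eq_zero.mp this

theorem natCast_five_pow_sub_one_eq_neg_one {k : ℕ} (hk : 0 < k) :
    ((5 ^ k - 1 : ℕ) : ZMod 5) = -1 := by
  have h1 : 1 ≤ 5 ^ k := Nat.one_le_pow _ _ (by norm_num)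
  push_cast [Nat.cast_sub h1]
  rw [show (5 : ZMod 5) = 0 by decide, zero_pow hk.ne', zero_sub]

theorem five_pow_mod_eight_of_odd {n : ℕ} (hn : Odd n) : 5 ^ n % 8 = 5 := by
  obtain ⟨k, rfl⟩ := hn
  rw [pow_succ, pow_mul, Nat.mul_mod, Nat.pow_mod]
  norm_num

theorem natCast_eq_one_or_neg_one_of_isSquare_five {p : ℕ} [Fact p.Prime] (hp2 : p ≠ 2)
    (hp5 : p ≠ 5) (h : IsSquare (5 : ZMod p)) : (p : ZMod 5) = 1 ∨ (p : ZMod 5) = -1 := by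
  have : Fact (Nat.Prime 5) := ⟨by norm_num⟩
  have hsq : IsSquare (p : ZMod 5) :=
    (ZMod.exists_sq_eq_prime_iff_of_mod_four_eq_one (by norm_num) hp2).mpr (mod_cast h)
  have hne : (p : ZMod 5) ≠ 0 := by
    rw [Ne, ZMod.natCast_eq_zero_iff]
    exact fun hd => hp5 ((Nat.prime_dvd_prime_iff_eq (by norm_num) Fact.out).mp hd).symm
  exact sq_eq_one_iff.mp ((ZMod.euler_criterion 5 hne).mp hsq)

theorem cast_totient_sq_mul_eq_one_of_primeFactors_eq_neg_one {u : ℕ} (hu : Squarefree u)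
    (h : ∀ p ∈ u.primeFactors, (p : ZMod 5) = -1) : (φ u : ZMod 5) ^ 2 * u = 1 := by
  conv_lhs =>
    rw [totient_eq_prod_sub_one_of_squarefree hu]
    arg 2
    rw [← prod_primeFactors_of_squarefree hu]
  push_cast
  rw [← prod_pow, ← prod_mul_distrib]
  refine prod_eq_one fun p hp => ?_
  rw [Nat.cast_sub (Nat.prime_of_mem_primeFactors hp).one_le, Nat.cast_one, h p hp]
  decide

theorem even_of_totient_five_pow_sub_one_eq {m n : ℕ} (hm : Even m)
    (h : φ (5 ^ m - 1) = 5 ^ n - 1) : Even n := by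
  have h24 : 5 ^ 2 - 1 ∣ 5 ^ m - 1 :=
    Nat.pow_sub_one_dvd_pow_sub_one 5 (even_iff_two_dvd.mp hm)
  have h8 : φ 24 ∣ 5 ^ n - 1 := h ▸ totient_dvd_of_dvd h24
  rw [show φ 24 = 8 by decide] at h8
  by_contra hn
  have h5n := five_pow_mod_eight_of_odd (Nat.not_even_iff_odd.mp hn)
  generalize 5 ^ n = x at h8 h5n
  omega

theorem natCast_eq_neg_one_of_dvd_five_pow_sub_one {m q : ℕ} (hm : Odd m) (hq : q.Prime)
    (hq2 : q ≠ 2) (hqm : q ∣ 5 ^ m - 1) (hq1 : (q : ZMod 5) ≠ 1) : (q : ZMod 5) = -1 := by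
  have := Fact.mk hq
  have h5 := natCast_pow_eq_one_of_dvd_pow_sub_one (by norm_num) hqm
  have hq5 : q ≠ 5 := by
    rintro rfl
    rw [ZMod.natCast_self, zero_pow hm.pos.ne'] at h5
    exact zero_ne_one h5
  have hsq : IsSquare (5 : ZMod q) := isSquare_of_pow_eq_one_of_odd hm (mod_cast h5)
  exact (natCast_eq_one_or_neg_one_of_isSquare_five hq2 hq5 hsq).resolve_left hq1

theorem coprime_totient_of_dvd_pow_sub_one {a m n u : ℕ} (hmn : Coprime m n)
    (ha : Coprime (a - 1) u) (hum : u ∣ a ^ m - 1) (hun : φ u ∣ a ^ n - 1) :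
    Coprime u (φ u) := by
  have hd : Nat.gcd u (φ u) ∣ a - 1 := by
    have := Nat.dvd_gcd ((Nat.gcd_dvd_left _ _).trans hum) ((Nat.gcd_dvd_right _ _).trans hun)
    rwa [pow_sub_one_gcd_pow_sub_one, hmn.gcd_eq_one, pow_one] at this
  exact Nat.eq_one_of_dvd_coprimes ha hd (Nat.gcd_dvd_left u (φ u))

theorem natCast_eq_neg_one_of_mem_primeFactors {m n u q : ℕ} (hm : Odd m) (hn : 0 < n)
    (hu : Odd u) (hum : u ∣ 5 ^ m - 1) (hun : φ u ∣ 5 ^ n - 1) (hq : q ∈ u.primeFactors) :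
    (q : ZMod 5) = -1 := by
  obtain ⟨hqp, hqu, -⟩ := Nat.mem_primeFactors.mp hq
  refine natCast_eq_neg_one_of_dvd_five_pow_sub_one hm hqp ?_ (hqu.trans hum) ?_
  · rintro rfl
    exact (Nat.not_even_iff_odd.mpr hu) (even_iff_two_dvd.mpr hqu)
  · intro hq1
    have hq1_dvd : q - 1 ∣ 5 ^ n - 1 := (totient_prime hqp ▸ totient_dvd_of_dvd hqu).trans hun
    have h5q : ((q - 1 : ℕ) : ZMod 5) = 0 := by
      rw [Nat.cast_sub hqp.one_le, hq1, Nat.cast_one, sub_self]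
    have h5n := (ZMod.natCast_eq_zero_iff _ 5).mpr
      (((ZMod.natCast_eq_zero_iff _ 5).mp h5q).trans hq1_dvd)
    rw [natCast_five_pow_sub_one_eq_neg_one hn] at h5n
    exact absurd h5n (by decide)

theorem totient_five_pow_sub_one_ne_of_odd {m n : ℕ} (hm : Odd m) (hn : 0 < n)
    (hmn : Coprime m n) : φ (5 ^ m - 1) ≠ 5 ^ n - 1 := by
  intro h
  obtain ⟨u, hNu, hu⟩ : ∃ u, 5 ^ m - 1 = 4 * u ∧ Odd u := by
    have h5m := five_pow_mod_eight_of_odd hm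
    generalize 5 ^ m = x at h5m
    exact ⟨(x - 1) / 4, by omega, Nat.odd_iff.mpr (by omega)⟩
  have hcop4 : Coprime 4 u := Nat.Coprime.pow_left 2 (Nat.coprime_two_left.mpr hu)
  have hφ : 2 * φ u = 5 ^ n - 1 := by rw [← h, hNu, totient_mul hcop4]; rfl
  have hum : u ∣ 5 ^ m - 1 := hNu ▸ dvd_mul_left u 4
  have hun : φ u ∣ 5 ^ n - 1 := hφ ▸ dvd_mul_left _ 2
  have hsf : Squarefree u :=
    squarefree_of_coprime_totient (coprime_totient_of_dvd_pow_sub_one hmn hcop4 hum hun)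
  have key := cast_totient_sq_mul_eq_one_of_primeFactors_eq_neg_one hsf
    fun q => natCast_eq_neg_one_of_mem_primeFactors hm hn hu hum hun
  have h2φ : 2 * (φ u : ZMod 5) = -1 := by
    rw [← natCast_five_pow_sub_one_eq_neg_one hn, ← hφ]; push_cast; rfl
  have h4u : 4 * (u : ZMod 5) = -1 := by
    rw [← natCast_five_pow_sub_one_eq_neg_one hm.pos, hNu]; push_cast; rfl
  have h16 : (16 : ZMod 5) * ((φ u : ZMod 5) ^ 2 * u) = -1 := by
    linear_combination (2 * (φ u : ZMod 5) - 1) * (4 * u) * h2φ + h4u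
  rw [key] at h16
  exact absurd h16 (by decide)

theorem totient_five_pow_not_coprime_general (m n : ℕ) (hn : 0 < n)
    (h : Nat.totient (5 ^ m - 1) = 5 ^ n - 1) :
    1 < Nat.gcd m n := by
  by_contra hle
  have hmn : Coprime m n := by
    have := Nat.gcd_pos_of_pos_right m hn
    unfold Coprime
    omega
  rcases Nat.even_or_odd m with hm | hm
  · have h2 : 2 ∣ Nat.gcd m n :=
      Nat.dvd_gcd hm.two_dvd (even_of_totient_five_pow_sub_one_eq hm h).two_dvd
    rw [hmn.gcd_eq_one] at h2
    omega
  · exact totient_five_pow_sub_one_ne_of_odd hm hn hmn h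

/-- If `m` and `n` are positive integers with `φ(5^m − 1) = 5^n − 1`, then
`m` and `n` are not coprime, i.e. `gcd(m, n) > 1`. -/
theorem totient_five_pow_not_coprime (m n : ℕ) (hm : 0 < m) (hn : 0 < n)
    (h : Nat.totient (5 ^ m - 1) = 5 ^ n - 1) :
    1 < Nat.gcd m n :=
  totient_five_pow_not_coprime_general m n hn h
end

section
/- If m and n are positive integers satisfying φ(5^m − 1) = 5^n − 1, and q is a prime with q < 10^4 and q ∣ m, then q ∣ n. -/
/-!
Put `N = 5 ^ m - 1`. Since `φ N = 5 ^ n - 1` is prime to `5` and `p - 1 ∣ φ N` for every prime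
`p ∣ N`, no prime factor of `N` is `≡ 1 (mod 5)`.

For `q = 2`, `24 ∣ N` gives `8 = φ 24 ∣ 5 ^ n - 1`, which forces `n` to be even.

For odd `q`, `K = (5 ^ q - 1) / 4` divides `N` and `K ≡ 1 (mod 10)`, so `K` is not prime, and `5`
has order `q` modulo each (odd) prime factor `p` of `K`. If `p ^ 2 ∣ N` for one of them, then
`p ∣ φ N = 5 ^ n - 1` and `q ∣ n`. Otherwise `K` has two distinct prime factors `p, r`, both
`≡ 1 (mod q)`, so `q ^ 2 ∣ (p - 1) * (r - 1) ∣ 5 ^ n - 1`; as `q` is not a base-`5` Wieferich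
prime, the order of `5` modulo `q ^ 2` is divisible by `q`, and again `q ∣ n`.
-/

open Nat

theorem ZMod.natCast_pow_eq_one_iff_dvd {d a n : ℕ} (ha : 0 < a) :
    (a : ZMod d) ^ n = 1 ↔ d ∣ a ^ n - 1 := by
  rw [← ZMod.natCast_eq_zero_iff, Nat.cast_sub (Nat.one_le_pow _ _ ha), sub_eq_zero]
  push_cast
  rfl

theorem not_dvd_pow_sub_one {a n : ℕ} (ha : 1 < a) (hn : n ≠ 0) : ¬ a ∣ a ^ n - 1 := by
  intro h
  have h1 : a ∣ 1 :=
    (Nat.dvd_sub_iff_right (Nat.one_le_pow _ _ (by omega)) (dvd_pow_self a hn)).mp h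
  exact ha.ne' (Nat.eq_one_of_dvd_one h1)

theorem orderOf_natCast_eq_of_dvd_pow_sub_one {p a q : ℕ} (hq : q.Prime) (ha : 0 < a)
    (h : p ∣ a ^ q - 1) (h1 : ¬ p ∣ a - 1) : orderOf (a : ZMod p) = q := by
  have := Fact.mk hq
  refine orderOf_eq_prime ((ZMod.natCast_pow_eq_one_iff_dvd ha).mpr h) fun ha1 => h1 ?_
  simpa using (ZMod.natCast_pow_eq_one_iff_dvd (n := 1) ha).mp (by rw [pow_one]; exact ha1)

theorem dvd_of_dvd_pow_prime_sub_one {p a q n : ℕ} (hq : q.Prime) (ha : 0 < a)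
    (hpq : p ∣ a ^ q - 1) (h1 : ¬ p ∣ a - 1) (hpn : p ∣ a ^ n - 1) : q ∣ n := by
  rw [← orderOf_natCast_eq_of_dvd_pow_sub_one hq ha hpq h1]
  exact orderOf_dvd_of_pow_eq_one ((ZMod.natCast_pow_eq_one_iff_dvd ha).mpr hpn)

theorem dvd_sub_one_of_dvd_pow_sub_one {p a q : ℕ} (hp : p.Prime) (hq : q.Prime) (ha : 0 < a)
    (h : p ∣ a ^ q - 1) (h1 : ¬ p ∣ a - 1) : q ∣ p - 1 := by
  have := Fact.mk hp
  have ha0 : (a : ZMod p) ≠ 0 := by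
    intro ha0
    have hpow := (ZMod.natCast_pow_eq_one_iff_dvd ha).mpr h
    rw [ha0, zero_pow hq.ne_zero] at hpow
    exact zero_ne_one hpow
  simpa [orderOf_natCast_eq_of_dvd_pow_sub_one hq ha h h1] using ZMod.orderOf_dvd_card_sub_one ha0

theorem dvd_of_sq_dvd_pow_sub_one {p a n : ℕ} (hp : p.Prime) (ha : 0 < a)
    (hW : ¬ p ^ 2 ∣ a ^ (p - 1) - 1) (h : p ^ 2 ∣ a ^ n - 1) : p ∣ n := by
  rcases eq_or_ne n 0 with rfl | hn
  · exact dvd_zero p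
  set x : ZMod (p ^ 2) := (a : ZMod (p ^ 2))
  have hxn : x ^ n = 1 := (ZMod.natCast_pow_eq_one_iff_dvd ha).mpr h
  have hx : IsUnit x := IsUnit.of_pow_eq_one hxn hn
  have hord_tot : orderOf x ∣ p * (p - 1) := by
    rw [← hx.unit_spec, orderOf_units, orderOf_dvd_iff_pow_eq_one]
    simpa [totient_prime_pow hp two_pos] using ZMod.pow_totient hx.unit
  by_contra hpn
  have hcop : p.Coprime (orderOf x) := hp.coprime_iff_not_dvd.mpr
    fun hpo => hpn (hpo.trans (orderOf_dvd_of_pow_eq_one hxn))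
  exact hW ((ZMod.natCast_pow_eq_one_iff_dvd ha).mp
    (orderOf_dvd_iff_pow_eq_one.mp (hcop.symm.dvd_of_dvd_mul_left hord_tot)))

theorem five_pow_mod_forty {t : ℕ} (ht : Odd t) : 5 ^ t % 40 = 5 := by
  obtain ⟨k, rfl⟩ := ht
  induction k with
  | zero => rfl
  | succ k ih =>
    rw [show 2 * (k + 1) + 1 = 2 * k + 1 + 2 by ring, pow_add, Nat.mul_mod, ih]
    norm_num

-- The least odd base-`5` Wieferich prime is `20771`.
theorem not_sq_dvd_five_pow_sub_one {p : ℕ} (hp : 2 < p) (hp4 : p < 10 ^ 4) :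
    ¬ p ^ 2 ∣ 5 ^ (p - 1) - 1 := by
  have hall : (List.range (10 ^ 4)).all
      (fun p => p ≤ 2 || (5 ^ (p - 1) - 1) % p ^ 2 != 0) = true := by
    decide +kernel
  simpa [Nat.dvd_iff_mod_eq_zero, hp.not_ge] using
    List.all_eq_true.mp hall p (List.mem_range.mpr hp4)

theorem Nat.Prime.sub_one_dvd_totient {p N : ℕ} (hp : p.Prime) (h : p ∣ N) :
    p - 1 ∣ φ N := by
  simpa [totient_prime hp] using totient_dvd_of_dvd h

theorem Nat.Prime.dvd_totient_of_sq_dvd {p N : ℕ} (hp : p.Prime) (h : p ^ 2 ∣ N) :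
    p ∣ φ N := by
  have hφ : φ (p ^ 2) = p * (p - 1) := by simp [totient_prime_pow hp two_pos]
  exact (Dvd.intro _ hφ.symm).trans (totient_dvd_of_dvd h)

theorem Nat.Prime.mul_sub_one_dvd_totient {p r N : ℕ} (hp : p.Prime) (hr : r.Prime)
    (hpr : p ≠ r) (h : p * r ∣ N) : (p - 1) * (r - 1) ∣ φ N := by
  simpa [totient_mul ((coprime_primes hp hr).mpr hpr), totient_prime hp, totient_prime hr]
    using totient_dvd_of_dvd h

theorem Nat.exists_prime_mul_prime_dvd {K : ℕ} (hK : 1 < K) (hKp : ¬ K.Prime) :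
    ∃ p r, p.Prime ∧ r.Prime ∧ p * r ∣ K := by
  obtain ⟨c, hc⟩ := K.minFac_dvd
  have hc1 : c ≠ 1 := by
    rintro rfl
    exact hKp (by rw [hc, mul_one]; exact minFac_prime hK.ne')
  exact ⟨_, _, minFac_prime hK.ne', minFac_prime hc1,
    (mul_dvd_mul_left K.minFac c.minFac_dvd).trans (dvd_of_eq hc.symm)⟩

section TotientEquation

variable {m n : ℕ}

theorem mod_five_ne_one_of_totient_eq (hn : 0 < n) (h : φ (5 ^ m - 1) = 5 ^ n - 1) {p : ℕ}
    (hp : p.Prime) (hpN : p ∣ 5 ^ m - 1) : p % 5 ≠ 1 := by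
  intro hp1
  have h5 : 5 ∣ p - 1 := by omega
  exact not_dvd_pow_sub_one (by norm_num) hn.ne' (h ▸ h5.trans (hp.sub_one_dvd_totient hpN))

theorem two_dvd_of_totient_eq (h : φ (5 ^ m - 1) = 5 ^ n - 1) (hm : 2 ∣ m) : 2 ∣ n := by
  have h8 : 8 ∣ 5 ^ n - 1 := by
    have h24 : φ 24 = 8 := by decide
    simpa [h24, h] using totient_dvd_of_dvd (Nat.pow_sub_one_dvd_pow_sub_one 5 hm)
  by_contra hn
  have hodd : Odd n := Nat.odd_iff.mpr (by omega)
  have := five_pow_mod_forty hodd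
  generalize 5 ^ n = x at *
  omega

theorem dvd_or_sq_dvd_of_totient_eq (hn : 0 < n) (h : φ (5 ^ m - 1) = 5 ^ n - 1) {q : ℕ}
    (hq : q.Prime) (hq2 : q ≠ 2) (hqm : q ∣ m) : q ∣ n ∨ q ^ 2 ∣ 5 ^ n - 1 := by
  obtain ⟨K, hK⟩ : 5 - 1 ∣ 5 ^ q - 1 := Nat.sub_one_dvd_pow_sub_one 5 q
  have hK10 : K % 10 = 1 := by
    have := five_pow_mod_forty (hq.odd_of_ne_two hq2)
    generalize 5 ^ q = x at *
    omega
  have hK1 : 1 < K := by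
    have : 5 ^ 2 ≤ 5 ^ q := Nat.pow_le_pow_right (by norm_num) hq.two_le
    omega
  have hKq : K ∣ 5 ^ q - 1 := Dvd.intro_left _ hK.symm
  have hKN : K ∣ 5 ^ m - 1 := hKq.trans (Nat.pow_sub_one_dvd_pow_sub_one 5 hqm)
  have hKnp : ¬ K.Prime := fun hKp => mod_five_ne_one_of_totient_eq hn h hKp hKN (by omega)
  obtain ⟨p, r, hp, hr, hprK⟩ := exists_prime_mul_prime_dvd hK1 hKnp
  have hK_factor : ∀ {s}, s.Prime → s ∣ K → ¬ s ∣ 5 - 1 := fun {s} hs hsK hs4 => by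
    obtain rfl : s = 2 := (prime_dvd_prime_iff_eq hs prime_two).mp (hs.dvd_of_dvd_pow (n := 2) hs4)
    omega
  have hpK : p ∣ K := (dvd_mul_right p r).trans hprK
  have hrK : r ∣ K := (dvd_mul_left r p).trans hprK
  rcases eq_or_ne p r with rfl | hpr
  · left
    have hpn : p ∣ 5 ^ n - 1 := h ▸ hp.dvd_totient_of_sq_dvd ((sq p ▸ hprK).trans hKN)
    exact dvd_of_dvd_pow_prime_sub_one hq (by norm_num) (hpK.trans hKq) (hK_factor hp hpK) hpn
  · right
    have hqp : q ∣ p - 1 :=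
      dvd_sub_one_of_dvd_pow_sub_one hp hq (by norm_num) (hpK.trans hKq) (hK_factor hp hpK)
    have hqr : q ∣ r - 1 :=
      dvd_sub_one_of_dvd_pow_sub_one hr hq (by norm_num) (hrK.trans hKq) (hK_factor hr hrK)
    rw [sq, ← h]
    exact (mul_dvd_mul hqp hqr).trans (hp.mul_sub_one_dvd_totient hr hpr (hprK.trans hKN))

end TotientEquation

theorem totient_five_pow_prime_divisor_general (m n q : ℕ) (hn : 0 < n)
    (h : Nat.totient (5 ^ m - 1) = 5 ^ n - 1)
    (hq : q.Prime) (hq4 : q < 10 ^ 4) (hqm : q ∣ m) :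
    q ∣ n := by
  rcases eq_or_ne q 2 with rfl | hq2
  · exact two_dvd_of_totient_eq h hqm
  rcases dvd_or_sq_dvd_of_totient_eq hn h hq hq2 hqm with hqn | hqn
  · exact hqn
  · exact dvd_of_sq_dvd_pow_sub_one hq (by norm_num)
      (not_sq_dvd_five_pow_sub_one (hq.two_le.lt_of_ne' hq2) hq4) hqn

/-- If `m` and `n` are positive integers with `φ(5^m − 1) = 5^n − 1`, and `q`
is a prime with `q < 10^4` dividing `m`, then `q` divides `n`. -/
theorem totient_five_pow_prime_divisor (m n q : ℕ) (hm : 0 < m) (hn : 0 < n)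
    (h : Nat.totient (5 ^ m - 1) = 5 ^ n - 1)
    (hq : q.Prime) (hq4 : q < 10 ^ 4) (hqm : q ∣ m) :
    q ∣ n :=
  totient_five_pow_prime_divisor_general m n q hn h hq hq4 hqm
end

section
/- Let M be a positive integer, let γ be an irrational real number and let p/q be a convergent of the continued fraction expansion of γ with q > 6M. Let A, B, μ be real numbers with A > 0 and B > 1, and set ε := ‖μq‖ − M·‖γq‖, where ‖·‖ denotes the distance to the nearest integer. If ε > 0, then there is no solution of the inequality 0 < uγ − v + μ < A·B^{−w} in positive integers u, v, w with u ≤ M and w ≥ log(Aq/ε)/log B. -/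
/-- The distance from a real number to the nearest integer. -/
noncomputable def distNearestInt (x : ℝ) : ℝ := |x - round x|

/-!
Put `Λ := uγ − v + μ`. Since `μq = qΛ − u·γq + vq` and `vq` is an integer, the triangle
inequality for the distance to the nearest integer gives `‖qΛ‖ ≥ ‖μq‖ − u‖γq‖ ≥ ε`, so a positive
`Λ` satisfies `qΛ ≥ ε`. The lower bound on `w` says `B^w ≥ Aq/ε`, i.e. `q·A·B^{−w} ≤ ε`, which
contradicts `qΛ < q·A·B^{−w}`.
-/

namespace distNearestInt

theorem le_abs_sub_intCast (x : ℝ) (z : ℤ) : distNearestInt x ≤ |x - z| :=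
  round_le x z

theorem le_abs (x : ℝ) : distNearestInt x ≤ |x| := by
  simpa using le_abs_sub_intCast x 0

theorem add_intCast (x : ℝ) (z : ℤ) : distNearestInt (x + z) = distNearestInt x := by
  rw [distNearestInt, distNearestInt, round_add_intCast, Int.cast_add, add_sub_add_right_eq_sub]

theorem sub_le (x y : ℝ) : distNearestInt (x - y) ≤ distNearestInt x + distNearestInt y :=
  calc distNearestInt (x - y) ≤ |x - y - ↑(round x - round y)| := le_abs_sub_intCast _ _
    _ = |(x - round x) - (y - round y)| := by push_cast; ring_nf
    _ ≤ |x - round x| + |y - round y| := abs_sub _ _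

theorem natCast_mul_le (n : ℕ) (x : ℝ) : distNearestInt (n * x) ≤ n * distNearestInt x :=
  calc distNearestInt (n * x) ≤ |n * x - ↑((n : ℤ) * round x)| := le_abs_sub_intCast _ _
    _ = n * |x - round x| := by
      rw [Int.cast_mul, Int.cast_natCast, ← mul_sub, abs_mul, Nat.abs_cast]

theorem sub_natCast_mul_le_linearForm (u : ℕ) (v q : ℤ) (γ μ : ℝ) :
    distNearestInt (μ * q) - u * distNearestInt (γ * q) ≤
      distNearestInt (q * (u * γ - v + μ)) := by
  have hsplit : μ * q = (q * (u * γ - v + μ) - u * (γ * q)) + ((v * q : ℤ) : ℝ) := by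
    push_cast; ring
  have := calc distNearestInt (μ * q)
      = distNearestInt (q * (u * γ - v + μ) - u * (γ * q)) := by rw [hsplit, add_intCast]
    _ ≤ distNearestInt (q * (u * γ - v + μ)) + distNearestInt (u * (γ * q)) := sub_le _ _
    _ ≤ distNearestInt (q * (u * γ - v + μ)) + u * distNearestInt (γ * q) := by
      gcongr; exact natCast_mul_le _ _
  linarith

end distNearestInt

theorem mul_rpow_neg_le_one_of_log_div_log_le {x B w : ℝ} (hx : 0 < x) (hB : 1 < B)
    (hw : Real.log x / Real.log B ≤ w) : x * B ^ (-w) ≤ 1 := by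
  have hB0 : 0 < B := by linarith
  have hxB : x ≤ B ^ w :=
    (Real.le_rpow_iff_log_le hx hB0).mpr ((div_le_iff₀ (Real.log_pos hB)).mp hw)
  rw [Real.rpow_neg hB0.le, ← div_eq_mul_inv]
  exact div_le_one_of_le₀ hxB (by positivity)

theorem baker_davenport_reduction_general (M : ℕ) (γ : ℝ)
    (q : ℤ) (hq0 : 0 < q)
    (A B μ : ℝ) (hA : 0 < A) (hB : 1 < B)
    (ε : ℝ) (hε : ε = distNearestInt (μ * q) - M * distNearestInt (γ * q))
    (hεpos : 0 < ε) :
    ¬ ∃ u v w : ℕ, 0 < u ∧ 0 < v ∧ 0 < w ∧ u ≤ M ∧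
        (w : ℝ) ≥ Real.log (A * q / ε) / Real.log B ∧
        0 < (u : ℝ) * γ - (v : ℝ) + μ ∧
        (u : ℝ) * γ - (v : ℝ) + μ < A * B ^ (-(w : ℝ)) := by
  rintro ⟨u, v, w, -, -, -, huM, hw, hpos, hlt⟩
  have hq : (0 : ℝ) < q := by exact_mod_cast hq0
  have hε_le : ε ≤ q * (u * γ - v + μ) :=
    calc ε ≤ distNearestInt (μ * q) - u * distNearestInt (γ * q) := by
          rw [hε]; gcongr; exact abs_nonneg _
      _ ≤ distNearestInt (q * (u * γ - v + μ)) := by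
          simpa using distNearestInt.sub_natCast_mul_le_linearForm u v q γ μ
      _ ≤ q * (u * γ - v + μ) :=
          (distNearestInt.le_abs _).trans_eq (abs_of_pos (mul_pos hq hpos))
  have hAB : A * q / ε * B ^ (-(w : ℝ)) ≤ 1 :=
    mul_rpow_neg_le_one_of_log_div_log_le (by positivity) hB hw
  rw [div_mul_eq_mul_div, div_le_one hεpos] at hAB
  linarith [mul_lt_mul_of_pos_left hlt hq]

/-- Baker–Davenport reduction (Dujella–Pethő variant).  Let `M` be a positive
integer, `γ` irrational, and `p/q` a convergent of the continued fraction of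
`γ` with `q > 6M`.  Let `A, B, μ` be reals with `A > 0`, `B > 1`, and put
`ε := ‖μq‖ − M‖γq‖` (`‖·‖` the distance to the nearest integer).  If `ε > 0`,
then there is no solution of `0 < uγ − v + μ < A·B^{−w}` in positive integers
`u, v, w` with `u ≤ M` and `w ≥ log(Aq/ε)/log B`. -/
theorem baker_davenport_reduction (M : ℕ) (hM : 0 < M) (γ : ℝ) (hγ : Irrational γ)
    (p q : ℤ) (hq0 : 0 < q)
    (hconv : ∃ i : ℕ, (GenContFract.of γ).convs i = (p : ℝ) / (q : ℝ))
    (hq : (q : ℝ) > 6 * M) (A B μ : ℝ) (hA : 0 < A) (hB : 1 < B)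
    (ε : ℝ) (hε : ε = distNearestInt (μ * q) - M * distNearestInt (γ * q))
    (hεpos : 0 < ε) :
    ¬ ∃ u v w : ℕ, 0 < u ∧ 0 < v ∧ 0 < w ∧ u ≤ M ∧
        (w : ℝ) ≥ Real.log (A * q / ε) / Real.log B ∧
        0 < (u : ℝ) * γ - (v : ℝ) + μ ∧
        (u : ℝ) * γ - (v : ℝ) + μ < A * B ^ (-(w : ℝ)) :=
  baker_davenport_reduction_general M γ q hq0 A B μ hA hB ε hε hεpos
end
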